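/- Let (X, χ) be a deterministic reader–writer transition system over a state set 𝒮 in which there is no infinite chain c₀ → c₁ → c₂ → ⋯ of consecutive silent writer transitions. Then the intersection of termination similarity ≼ter with its converse ≽ter coincides with termination equivalence: for readers, p (≼ter ∩ ≽ter) q iff ter^r(p) = ter^r(q), and for writers, c (≼ter ∩ ≽ter) d iff ter^w(c) = ter^w(d). -/

import Mathlib

/-!
The termination value of a writer is exactly what it can reach by arbitrary steps:
`terW M c = some s` iff `c ⇓₂ s`. Determinism makes `⇓₂` single-valued and invariant under
every silent or output step, so termination equivalence is itself a termination simulation.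
Conversely, a termination simulation transports `⇓₂ s` along `⇒₂`, so similarity in both
directions forces equal termination values.
-/
namespace RW

/-- A deterministic reader–writer transition system over a state set `S`:
`rstep p s = c` means `p,s → c`; `wstep c = .inl (d,s)` means `c →ˢ d`;
`wstep c = .inr (.inl d)` means `c → d`; `wstep c = .inr (.inr s)` means `c ↓ s`. -/
structure DRW (S : Type) where
  Rd : Type
  Wr : Type
  rstep : Rd → S → Wr
  wstep : Wr → (Wr × S) ⊕ (Wr ⊕ S)

variable {S : Type}

/-- The output transition `c →ˢ d`. -/
def OutTr (M : DRW S) (c : M.Wr) (s : S) (d : M.Wr) : Prop := M.wstep c = .inl (d, s)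

/-- The silent transition `c → d`. -/
def TauTr (M : DRW S) (c d : M.Wr) : Prop := M.wstep c = .inr (.inl d)

/-- The termination transition `c ↓ s`. -/
def DownTr (M : DRW S) (c : M.Wr) (s : S) : Prop := M.wstep c = .inr (.inr s)

/-- The weak silent transition `c ⇒ d`: a finite chain of silent steps. -/
def WSil (M : DRW S) : M.Wr → M.Wr → Prop := Relation.ReflTransGen (TauTr M)

/-- The weak output transition `c ⇒ˢ d`: `c ⇒ c' →ˢ d` for some `c'`. -/
def WOut (M : DRW S) (c : M.Wr) (s : S) (d : M.Wr) : Prop :=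
  ∃ c', WSil M c c' ∧ OutTr M c' s d

/-- The weak termination transition `c ⇓ s`: `c ⇒ c' ↓ s` for some `c'`. -/
def WDone (M : DRW S) (c : M.Wr) (s : S) : Prop :=
  ∃ c', WSil M c c' ∧ DownTr M c' s

/-- `ReachL M c l d`: from `c` there is a chain of weak output transitions
producing the list `l` of states and ending in `d`. -/
def ReachL (M : DRW S) : M.Wr → List S → M.Wr → Prop
  | c, [], d => c = d
  | c, s :: l, d => ∃ c', WOut M c s c' ∧ ReachL M c' l d

/-- `TrcEntry M c n v` holds iff the `n`-th entry (0-indexed) of the trace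
`trc^w(c)` is `v`, where `v = .inl s` tags an intermediate output state and
`v = .inr s` tags the final state of a finite trace. -/
def TrcEntry (M : DRW S) (c : M.Wr) (n : ℕ) (v : S ⊕ S) : Prop :=
  (∃ l d s d', ReachL M c l d ∧ l.length = n ∧ WOut M d s d' ∧ v = .inl s) ∨
  (∃ l d s, ReachL M c l d ∧ l.length = n ∧ WDone M d s ∧ v = .inr s)

open Classical in
/-- The writer trace map `trc^w : X_w → 𝒮^∞`, with a (nonempty, finite or infinite)
trace encoded as a function `ℕ → Option (S ⊕ S)`: a finite trace `(s₁,…,sₙ,s)`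
sends `0,…,n-1` to `some (.inl sᵢ₊₁)`, `n` to `some (.inr s)` and all larger
numbers to `none`; an infinite trace `(s₁,s₂,…)` sends each `n` to
`some (.inl sₙ₊₁)`. -/
noncomputable def trcW (M : DRW S) (c : M.Wr) : ℕ → Option (S ⊕ S) := fun n =>
  if h : ∃ v, TrcEntry M c n v then some h.choose else none

/-- The reader trace map `trc^r : X_r → (𝒮^∞)^𝒮`: `trc^r(p)(s) = trc^w(c)` where
`p,s → c`. -/
noncomputable def trcR (M : DRW S) (p : M.Rd) (s : S) : ℕ → Option (S ⊕ S) :=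
  trcW M (M.rstep p s)

open Classical in
/-- The writer cost map: `cstW M c = some (n,s)` iff `trc^w(c) = (s₁,…,sₙ,s)` is
finite, and `none` (i.e. `*`) iff `trc^w(c)` is infinite. -/
noncomputable def cstW (M : DRW S) (c : M.Wr) : Option (ℕ × S) :=
  if h : ∃ ns : ℕ × S, trcW M c ns.1 = some (.inr ns.2) then some h.choose else none

/-- The reader cost map. -/
noncomputable def cstR (M : DRW S) (p : M.Rd) (s : S) : Option (ℕ × S) :=
  cstW M (M.rstep p s)

/-- The writer termination map: the last element of a finite trace, `none` (`*`)
for an infinite trace. -/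
noncomputable def terW (M : DRW S) (c : M.Wr) : Option S := (cstW M c).map Prod.snd

/-- The reader termination map. -/
noncomputable def terR (M : DRW S) (p : M.Rd) (s : S) : Option S :=
  (cstR M p s).map Prod.snd

end RW

namespace RW

variable {S : Type}

/-- The weak transition `c ⇒₂ d`: a finite chain of silent or output steps. -/
def WAny (M : DRW S) : M.Wr → M.Wr → Prop :=
  Relation.ReflTransGen (fun c d => TauTr M c d ∨ ∃ s, OutTr M c s d)

/-- The weak termination transition `c ⇓₂ s`: `c ⇒₂ c' ↓ s` for some `c'`. -/
def WDone2 (M : DRW S) (c : M.Wr) (s : S) : Prop :=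
  ∃ c', WAny M c c' ∧ DownTr M c' s

/-- A termination simulation on a deterministic reader–writer transition system. -/
def IsTermSim (M : DRW S) (Rr : M.Rd → M.Rd → Prop) (Rw : M.Wr → M.Wr → Prop) : Prop :=
  (∀ p q s c, Rr p q → M.rstep p s = c → ∃ d, M.rstep q s = d ∧ Rw c d) ∧
  (∀ c d c', Rw c d → ((∃ s, OutTr M c s c') ∨ TauTr M c c') →
      ∃ d', WAny M d d' ∧ Rw c' d') ∧
  (∀ c d s, Rw c d → DownTr M c s → WDone2 M d s)

/-- Two readers are related by termination similarity `≼ter` (the greatest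
termination simulation, i.e. the union of all termination simulations). -/
def TermSimR (M : DRW S) (p q : M.Rd) : Prop :=
  ∃ Rr Rw, IsTermSim M Rr Rw ∧ Rr p q

/-- Two writers are related by termination similarity `≼ter`. -/
def TermSimW (M : DRW S) (c d : M.Wr) : Prop :=
  ∃ Rr Rw, IsTermSim M Rr Rw ∧ Rw c d

theorem _root_.Relation.ReflTransGen.eq_of_right_unique {α : Type*} {r : α → α → Prop}
    {a b c : α} (U : Relator.RightUnique r) (ab : Relation.ReflTransGen r a b)
    (ac : Relation.ReflTransGen r a c) (hb : ∀ x, ¬ r b x) (hc : ∀ x, ¬ r c x) : b = c := by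
  rcases Relation.ReflTransGen.total_of_right_unique U ab ac with h | h
  · exact h.cases_head.resolve_right fun ⟨x, hx, _⟩ => hb x hx
  · exact (h.cases_head.resolve_right fun ⟨x, hx, _⟩ => hc x hx).symm

def AnyTr (M : DRW S) (c d : M.Wr) : Prop := TauTr M c d ∨ ∃ s, OutTr M c s d

section

variable {M : DRW S} {c c' d e : M.Wr} {s t : S}

lemma tauTr_rightUnique : Relator.RightUnique (TauTr M) := fun _ _ _ h h' =>
  Sum.inl_injective (Sum.inr_injective (Eq.trans (Eq.symm h) h'))

lemma anyTr_rightUnique : Relator.RightUnique (AnyTr M) := by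
  rintro c d d' (h | ⟨s, h⟩) (h' | ⟨s', h'⟩) <;> have e := Eq.trans (Eq.symm h) h' <;>
    simp_all

lemma not_tauTr_of_outTr (h : OutTr M c s d) (x : M.Wr) : ¬ TauTr M c x := fun h' =>
  Sum.inl_ne_inr (Eq.trans (Eq.symm h) h')

lemma not_tauTr_of_downTr (h : DownTr M c s) (x : M.Wr) : ¬ TauTr M c x := fun h' =>
  Sum.inr_ne_inl (Sum.inr_injective (Eq.trans (Eq.symm h) h'))

lemma not_anyTr_of_downTr (h : DownTr M c s) (x : M.Wr) : ¬ AnyTr M c x := by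
  rintro (h' | ⟨t, h'⟩)
  · exact not_tauTr_of_downTr h x h'
  · exact Sum.inr_ne_inl (Eq.trans (Eq.symm h) h')

lemma wOut_unique (h : WOut M c s d) (h' : WOut M c t e) : s = t ∧ d = e := by
  obtain ⟨c₁, hc₁, ho⟩ := h
  obtain ⟨c₂, hc₂, ho'⟩ := h'
  obtain rfl := Relation.ReflTransGen.eq_of_right_unique tauTr_rightUnique hc₁ hc₂
    (not_tauTr_of_outTr ho) (not_tauTr_of_outTr ho')
  obtain ⟨rfl, rfl⟩ := Prod.ext_iff.mp (Sum.inl_injective (Eq.trans (Eq.symm ho) ho'))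
  exact ⟨rfl, rfl⟩

lemma wDone_unique (h : WDone M c s) (h' : WDone M c t) : s = t := by
  obtain ⟨c₁, hc₁, ho⟩ := h
  obtain ⟨c₂, hc₂, ho'⟩ := h'
  obtain rfl := Relation.ReflTransGen.eq_of_right_unique tauTr_rightUnique hc₁ hc₂
    (not_tauTr_of_downTr ho) (not_tauTr_of_downTr ho')
  exact Sum.inr_injective (Sum.inr_injective (Eq.trans (Eq.symm ho) ho'))

lemma not_wOut_of_wDone (h : WDone M c s) : ¬ WOut M c t d := by
  rintro ⟨c₁, hc₁, ho⟩
  obtain ⟨c₂, hc₂, ho'⟩ := h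
  obtain rfl := Relation.ReflTransGen.eq_of_right_unique tauTr_rightUnique hc₁ hc₂
    (not_tauTr_of_outTr ho) (not_tauTr_of_downTr ho')
  exact Sum.inl_ne_inr (Eq.trans (Eq.symm ho) ho')

lemma reachL_unique : ∀ {l l' : List S} {c d d' : M.Wr},
    ReachL M c l d → ReachL M c l' d' → l.length = l'.length → d = d'
  | [], [], _, _, _, h, h', _ => Eq.trans (Eq.symm h) h'
  | _ :: _, _ :: _, _, _, _, ⟨_, ho, hr⟩, ⟨_, ho', hr'⟩, hlen => by
    obtain ⟨rfl, rfl⟩ := wOut_unique ho ho'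
    exact reachL_unique hr hr' (Nat.succ.inj hlen)
  | [], _ :: _, _, _, _, _, _, hlen | _ :: _, [], _, _, _, _, _, hlen => by simp at hlen

lemma trcEntry_unique {n : ℕ} {v v' : S ⊕ S} (h : TrcEntry M c n v) (h' : TrcEntry M c n v') :
    v = v' := by
  rcases h with ⟨l, d, s, _, hr, rfl, ho, rfl⟩ | ⟨l, d, s, hr, rfl, ho, rfl⟩ <;>
    rcases h' with ⟨l', d', t, _, hr', hl, ho', rfl⟩ | ⟨l', d', t, hr', hl, ho', rfl⟩ <;>
    obtain rfl := reachL_unique hr hr' hl.symm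
  · rw [(wOut_unique ho ho').1]
  · exact (not_wOut_of_wDone ho' ho).elim
  · exact (not_wOut_of_wDone ho ho').elim
  · rw [wDone_unique ho ho']

lemma trcW_eq_some_iff {n : ℕ} {v : S ⊕ S} : trcW M c n = some v ↔ TrcEntry M c n v := by
  unfold trcW
  split_ifs with h
  · rw [Option.some_inj]
    exact ⟨fun hv => hv ▸ h.choose_spec, trcEntry_unique h.choose_spec⟩
  · exact ⟨nofun, fun hv => absurd ⟨v, hv⟩ h⟩

lemma exists_trcEntry_inr_iff :
    (∃ n, TrcEntry M c n (.inr s)) ↔ ∃ l d, ReachL M c l d ∧ WDone M d s := by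
  constructor
  · rintro ⟨n, ⟨_, _, _, _, _, _, _, h⟩ | ⟨l, d, s', hr, _, ho, h⟩⟩
    · exact absurd h Sum.inr_ne_inl
    · obtain rfl := Sum.inr_injective h
      exact ⟨l, d, hr, ho⟩
  · rintro ⟨l, d, hr, ho⟩
    exact ⟨_, .inr ⟨l, d, s, hr, rfl, ho, rfl⟩⟩

lemma wAny_of_wSil (h : WSil M c d) : WAny M c d :=
  Relation.ReflTransGen.mono (fun _ _ => Or.inl) _ _ h

lemma wAny_of_reachL : ∀ {l : List S} {c d : M.Wr}, ReachL M c l d → WAny M c d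
  | [], _, _, rfl => .refl
  | _ :: _, _, _, ⟨_, ⟨_, hc, ho⟩, hr⟩ =>
    (wAny_of_wSil hc).trans (.head (Or.inr ⟨_, ho⟩) (wAny_of_reachL hr))

lemma exists_reachL_wDone_iff_wDone2 :
    (∃ l d, ReachL M c l d ∧ WDone M d s) ↔ WDone2 M c s := by
  constructor
  · rintro ⟨l, d, hr, e, he, hs⟩
    exact ⟨e, (wAny_of_reachL hr).trans (wAny_of_wSil he), hs⟩
  · rintro ⟨e, he, hs⟩
    induction he using Relation.ReflTransGen.head_induction_on with
    | refl => exact ⟨[], e, rfl, e, .refl, hs⟩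
    | @head c c₁ hstep _ ih =>
      obtain ⟨l, d, hr, hd⟩ := ih
      rcases hstep with htau | ⟨t, hout⟩
      · rcases l with _ | ⟨t, l⟩
        · obtain rfl : c₁ = d := hr
          obtain ⟨x, hx, hxs⟩ := hd
          exact ⟨[], c, rfl, x, .head htau hx, hxs⟩
        · obtain ⟨c₂, ⟨x, hx, hxo⟩, hr⟩ := hr
          exact ⟨t :: l, d, ⟨c₂, ⟨x, .head htau hx, hxo⟩, hr⟩, hd⟩
      · exact ⟨t :: l, d, ⟨c₁, ⟨c, .refl, hout⟩, hr⟩, hd⟩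

lemma wDone2_unique (h : WDone2 M c s) (h' : WDone2 M c t) : s = t := by
  obtain ⟨d, hd, hs⟩ := h
  obtain ⟨d', hd', ht⟩ := h'
  obtain rfl := Relation.ReflTransGen.eq_of_right_unique anyTr_rightUnique hd hd'
    (not_anyTr_of_downTr hs) (not_anyTr_of_downTr ht)
  exact Sum.inr_injective (Sum.inr_injective (Eq.trans (Eq.symm hs) ht))

lemma terW_eq_some_iff : terW M c = some s ↔ WDone2 M c s := by
  -- `cstW` chooses some final trace entry; `wDone2_unique` makes the choice irrelevant.
  unfold terW cstW
  split_ifs with h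
  · have hc : WDone2 M c h.choose.2 := exists_reachL_wDone_iff_wDone2.mp
      (exists_trcEntry_inr_iff.mp ⟨_, trcW_eq_some_iff.mp h.choose_spec⟩)
    rw [Option.map_some, Option.some_inj]
    exact ⟨fun hs => hs ▸ hc, wDone2_unique hc⟩
  · rw [Option.map_none]
    refine ⟨nofun, fun hs => absurd ?_ h⟩
    obtain ⟨n, hn⟩ := exists_trcEntry_inr_iff.mpr (exists_reachL_wDone_iff_wDone2.mpr hs)
    exact ⟨(n, s), trcW_eq_some_iff.mpr hn⟩

lemma wDone2_iff_of_anyTr (h : AnyTr M c c') : WDone2 M c s ↔ WDone2 M c' s := by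
  constructor
  · rintro ⟨e, he, hs⟩
    rcases Relation.ReflTransGen.cases_head he with rfl | ⟨x, hx, hxe⟩
    · exact (not_anyTr_of_downTr hs c' h).elim
    · obtain rfl := anyTr_rightUnique h hx
      exact ⟨e, hxe, hs⟩
  · rintro ⟨e, he, hs⟩
    exact ⟨e, .head h he, hs⟩

lemma terW_eq_of_anyTr (h : AnyTr M c c') : terW M c = terW M c' :=
  Option.ext fun _ => by rw [terW_eq_some_iff, terW_eq_some_iff, wDone2_iff_of_anyTr h]

lemma isTermSim_terEquiv :
    IsTermSim M (fun p q => terR M p = terR M q) (fun c d => terW M c = terW M d) := by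
  refine ⟨fun p q s c hpq hc => ⟨_, rfl, ?_⟩, fun c d c' hcd hstep => ⟨d, .refl, ?_⟩,
    fun c d s hcd hs => ?_⟩
  · subst hc
    exact congrFun hpq s
  · exact (terW_eq_of_anyTr hstep.symm).symm.trans hcd
  · exact terW_eq_some_iff.mp (hcd ▸ terW_eq_some_iff.mpr ⟨c, .refl, hs⟩)

lemma IsTermSim.exists_wAny {Rr : M.Rd → M.Rd → Prop} {Rw : M.Wr → M.Wr → Prop}
    (hR : IsTermSim M Rr Rw) (h : WAny M c c') (hcd : Rw c d) :
    ∃ d', WAny M d d' ∧ Rw c' d' := by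
  induction h using Relation.ReflTransGen.head_induction_on generalizing d with
  | refl => exact ⟨d, .refl, hcd⟩
  | head hstep _ ih =>
    obtain ⟨d₁, hd₁, hcd₁⟩ := hR.2.1 _ d _ hcd hstep.symm
    obtain ⟨d', hd', hcd'⟩ := ih hcd₁
    exact ⟨d', hd₁.trans hd', hcd'⟩

lemma IsTermSim.wDone2 {Rr : M.Rd → M.Rd → Prop} {Rw : M.Wr → M.Wr → Prop}
    (hR : IsTermSim M Rr Rw) (hcd : Rw c d) (h : WDone2 M c s) : WDone2 M d s := by
  obtain ⟨c', hc', hs⟩ := h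
  obtain ⟨d', hd', hcd'⟩ := hR.exists_wAny hc' hcd
  obtain ⟨d'', hd'', hs'⟩ := hR.2.2 _ _ _ hcd' hs
  exact ⟨d'', hd'.trans hd'', hs'⟩

lemma TermSimW.terW_eq_some (h : TermSimW M c d) (hs : terW M c = some s) :
    terW M d = some s := by
  obtain ⟨Rr, Rw, hR, hcd⟩ := h
  exact terW_eq_some_iff.mpr (hR.wDone2 hcd (terW_eq_some_iff.mp hs))

lemma terW_eq_of_termSimW (h : TermSimW M c d) (h' : TermSimW M d c) : terW M c = terW M d :=
  Option.ext fun _ => ⟨h.terW_eq_some, h'.terW_eq_some⟩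

lemma TermSimR.termSimW_rstep {p q : M.Rd} (h : TermSimR M p q) (s : S) :
    TermSimW M (M.rstep p s) (M.rstep q s) := by
  obtain ⟨Rr, Rw, hR, hpq⟩ := h
  obtain ⟨d, rfl, hd⟩ := hR.1 p q s _ hpq rfl
  exact ⟨Rr, Rw, hR, hd⟩

end

theorem two_way_termination_similarity_eq_termination_equivalence_general (M : DRW S) :
    (∀ p q : M.Rd, (TermSimR M p q ∧ TermSimR M q p) ↔ terR M p = terR M q) ∧
    (∀ c d : M.Wr, (TermSimW M c d ∧ TermSimW M d c) ↔ terW M c = terW M d) := by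
  refine ⟨fun p q => ⟨fun ⟨hpq, hqp⟩ => ?_, fun h => ?_⟩,
    fun c d => ⟨fun ⟨hcd, hdc⟩ => terW_eq_of_termSimW hcd hdc, fun h => ?_⟩⟩
  · funext s
    exact terW_eq_of_termSimW (hpq.termSimW_rstep s) (hqp.termSimW_rstep s)
  · exact ⟨⟨_, _, isTermSim_terEquiv, h⟩, ⟨_, _, isTermSim_terEquiv, h.symm⟩⟩
  · exact ⟨⟨_, _, isTermSim_terEquiv, h⟩, ⟨_, _, isTermSim_terEquiv, h.symm⟩⟩

/-- in a deterministic reader–writer transition system with no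
infinite chain of consecutive silent writer transitions, the intersection of
termination similarity with its converse coincides with termination equivalence,
both on readers and on writers. -/
theorem two_way_termination_similarity_eq_termination_equivalence (M : DRW S)
    (nodiv : ¬ ∃ f : ℕ → M.Wr, ∀ n, TauTr M (f n) (f (n + 1))) :
    (∀ p q : M.Rd, (TermSimR M p q ∧ TermSimR M q p) ↔ terR M p = terR M q) ∧
    (∀ c d : M.Wr, (TermSimW M c d ∧ TermSimW M d c) ↔ terW M c = terW M d) :=
  two_way_termination_similarity_eq_termination_equivalence_general M

end RW
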